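/- Let A ∈ ℂ^{2×2} have distinct nonzero eigenvalues λ₁ and λ₂ (i.e., the characteristic polynomial of A is (X − λ₁)(X − λ₂) with λ₁ ≠ λ₂ and λ₁, λ₂ ≠ 0), let γ = (λ₂ + λ₁)/(λ₂ − λ₁), and assume A is apportionable. Then the set K(A) of apportionment constants of A equals [ρ(A)/√2, ∞) if γ = 0, and otherwise K(A) equals the singleton { |(λ₁ + λ₂)/2| · √( 1 + (1 − |γ|⁴) / (2(|γ|⁴ − Re(γ²))) ) }. -/

import Mathlib

/-- A square complex matrix is *uniform* if all of its entries have the same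
modulus `κ` for some nonnegative real `κ`. -/
def IsUniform {ι : Type*} [Fintype ι] (B : Matrix ι ι ℂ) : Prop :=
  ∃ κ : ℝ, 0 ≤ κ ∧ ∀ i j, ‖B i j‖ = κ

/-- A square complex matrix `A` is *apportionable* if there is an invertible
matrix `M` such that `M * A * M⁻¹` is uniform. -/
def IsApportionable {ι : Type*} [Fintype ι] [DecidableEq ι] (A : Matrix ι ι ℂ) : Prop :=
  ∃ M : Matrix ι ι ℂ, IsUnit M ∧ IsUniform (M * A * M⁻¹)

/-- A nonnegative real `κ` is an *apportionment constant* of `A` if there is an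
invertible matrix `M` such that every entry of `M * A * M⁻¹` has modulus `κ`. -/
def IsApportionmentConstant {ι : Type*} [Fintype ι] [DecidableEq ι]
    (A : Matrix ι ι ℂ) (κ : ℝ) : Prop :=
  0 ≤ κ ∧ ∃ M : Matrix ι ι ℂ, IsUnit M ∧ ∀ i j, ‖(M * A * M⁻¹) i j‖ = κ

/-- `K(A)`, the set of apportionment constants of `A`. -/
def apportionmentConstants {ι : Type*} [Fintype ι] [DecidableEq ι]
    (A : Matrix ι ι ℂ) : Set ℝ :=
  {κ : ℝ | IsApportionmentConstant A κ}

/-- The spectral radius of a complex square matrix: the maximum modulus of its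
eigenvalues. -/
noncomputable def specRad {ι : Type*} [Fintype ι] [DecidableEq ι]
    (A : Matrix ι ι ℂ) : ℝ :=
  sSup ((fun z : ℂ => ‖z‖) '' spectrum ℂ A)

open Polynomial Matrix in
theorem aux_trace_det (A : Matrix (Fin 2) (Fin 2) ℂ) (l1 l2 : ℂ)
    (hchar : A.charpoly = (X - C l1) * (X - C l2)) :
    A.trace = l1 + l2 ∧ A.det = l1 * l2 := by
  have hexp : (X - C l1) * (X - C l2) = X^2 - C (l1 + l2) * X + C (l1 * l2) := by
    simp [C_add, C_mul]; ring
  rw [hexp] at hchar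
  have h1 := A.trace_eq_neg_charpoly_coeff
  have h2 := A.det_eq_sign_charpoly_coeff
  rw [hchar] at h1 h2
  simp [Fintype.card_fin, coeff_X_pow, coeff_C] at h1 h2
  exact ⟨h1, h2⟩

open Matrix in
theorem aux_conj_trace_det (M A : Matrix (Fin 2) (Fin 2) ℂ) (hM : IsUnit M) :
    (M * A * M⁻¹).trace = A.trace ∧ (M * A * M⁻¹).det = A.det := by
  have hd : IsUnit M.det := (Matrix.isUnit_iff_isUnit_det M).mp hM
  constructor
  · rw [Matrix.trace_mul_comm, ← Matrix.mul_assoc, Matrix.nonsing_inv_mul M hd, Matrix.one_mul]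
  · rw [Matrix.det_mul, Matrix.det_mul]
    have h : M.det * M⁻¹.det = 1 := by
      rw [← Matrix.det_mul, Matrix.mul_nonsing_inv M hd, Matrix.det_one]
    calc M.det * A.det * M⁻¹.det = A.det * (M.det * M⁻¹.det) := by ring
    _ = A.det := by rw [h, mul_one]

theorem aux_core (cc x : ℂ) (κ : ℝ)
    (h1 : ‖cc + x‖ = κ) (h2 : ‖cc - x‖ = κ) :
    κ^2 = ‖cc‖ ^ 2 + ‖x‖ ^ 2 ∧ cc.re * x.re + cc.im * x.im = 0 := by
  have e1 : Complex.normSq (cc + x) = κ^2 := by rw [← Complex.sq_norm, h1]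
  have e2 : Complex.normSq (cc - x) = κ^2 := by rw [← Complex.sq_norm, h2]
  have e3 : ‖cc‖ ^ 2 = Complex.normSq cc := Complex.sq_norm cc
  have e4 : ‖x‖ ^ 2 = Complex.normSq x := Complex.sq_norm x
  simp only [Complex.normSq_apply, Complex.add_re, Complex.add_im, Complex.sub_re,
    Complex.sub_im] at e1 e2 e3 e4
  rw [e3, e4]
  constructor <;> nlinarith [e1, e2]

open Polynomial Matrix in
theorem aux_member_facts (A : Matrix (Fin 2) (Fin 2) ℂ) (l1 l2 : ℂ)
    (hchar : A.charpoly = (X - C l1) * (X - C l2)) (κ : ℝ)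
    (hκ : IsApportionmentConstant A κ) :
    0 ≤ κ ∧ ∃ x bc : ℂ,
      κ^2 = ‖(l1+l2)/2‖ ^ 2 + ‖x‖ ^ 2 ∧
      ((l1+l2)/2).re * x.re + ((l1+l2)/2).im * x.im = 0 ∧
      x^2 + bc = ((l1-l2)/2)^2 ∧
      ‖bc‖ = κ^2 := by
  obtain ⟨hκ0, M, hM, hunif⟩ := hκ
  set B := M * A * M⁻¹ with hB
  obtain ⟨htrA, hdetA⟩ := aux_trace_det A l1 l2 hchar
  obtain ⟨htrB, hdetB⟩ := aux_conj_trace_det M A hM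
  rw [htrA] at htrB
  rw [hdetA] at hdetB
  have htr2 : B 0 0 + B 1 1 = l1 + l2 := by rw [← Matrix.trace_fin_two]; exact htrB
  have hdet2 : B 0 0 * B 1 1 - B 0 1 * B 1 0 = l1 * l2 := by
    rw [← Matrix.det_fin_two]; exact hdetB
  refine ⟨hκ0, (B 0 0 - B 1 1)/2, B 0 1 * B 1 0, ?_, ?_, ?_, ?_⟩
  · have ha : (l1+l2)/2 + (B 0 0 - B 1 1)/2 = B 0 0 := by linear_combination (-1/2 : ℂ) * htr2
    have he : (l1+l2)/2 - (B 0 0 - B 1 1)/2 = B 1 1 := by linear_combination (-1/2 : ℂ) * htr2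
    exact (aux_core _ _ κ (by rw [ha]; exact hunif 0 0) (by rw [he]; exact hunif 1 1)).1
  · have ha : (l1+l2)/2 + (B 0 0 - B 1 1)/2 = B 0 0 := by linear_combination (-1/2 : ℂ) * htr2
    have he : (l1+l2)/2 - (B 0 0 - B 1 1)/2 = B 1 1 := by linear_combination (-1/2 : ℂ) * htr2
    exact (aux_core _ _ κ (by rw [ha]; exact hunif 0 0) (by rw [he]; exact hunif 1 1)).2
  · linear_combination ((B 0 0 + B 1 1 + l1 + l2)/4) * htr2 - hdet2
  · rw [norm_mul, hunif 0 1, hunif 1 0, sq]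

theorem aux_kappa_sq (γ cc d : ℂ) (hγ1 : γ ≠ 1) (hγm1 : γ ≠ -1)
    (hcc0 : cc ≠ 0) (hd0 : d ≠ 0) (hccd : cc = -(γ * d))
    (κ : ℝ) (x bc : ℂ)
    (hk2 : κ^2 = ‖cc‖ ^ 2 + ‖x‖ ^ 2)
    (horth : cc.re * x.re + cc.im * x.im = 0)
    (hxbc : x^2 + bc = d^2)
    (habc : ‖bc‖ = κ^2) :
    κ^2 = ‖cc‖ ^ 2 * (1 +
      (1 - ‖γ‖ ^ 4) / (2 * (‖γ‖ ^ 4 - (γ^2).re))) := by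
  set t : ℝ := (x / cc).im with htdef
  have hre : (x / cc).re = 0 := by
    rw [Complex.div_re, ← add_div, div_eq_zero_iff]
    left; linarith [horth]
  have hx : x = cc * ((t:ℂ) * Complex.I) := by
    have hq : x / cc = (t:ℂ) * Complex.I := by
      apply Complex.ext
      · simpa using hre
      · simp [htdef]
    rw [← hq]
    field_simp
  set nc : ℝ := Complex.normSq cc with hncdef
  set nd : ℝ := Complex.normSq d with hnddef
  set g : ℝ := Complex.normSq γ with hgdef
  set u : ℝ := (γ^2).re with hudef
  set v : ℝ := (γ^2).im with hvdef
  have hnc0 : nc ≠ 0 := (Complex.normSq_pos.mpr hcc0).ne'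
  have hnd0 : nd ≠ 0 := (Complex.normSq_pos.mpr hd0).ne'
  have habs_cc : ‖cc‖ ^ 2 = nc := Complex.sq_norm cc
  have habs_γ4 : ‖γ‖ ^ 4 = g^2 := by
    have h' : ‖γ‖ ^ 4 = (‖γ‖ ^ 2)^2 := by ring
    rw [h', Complex.sq_norm]
  have hnx : ‖x‖ ^ 2 = nc * t^2 := by
    have h' : ‖x‖ = ‖cc‖ * |t| := by
      rw [hx, norm_mul, norm_mul, Complex.norm_I, Complex.norm_real, Real.norm_eq_abs, mul_one]
    rw [h', mul_pow, sq_abs, Complex.sq_norm]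
  have hk2' : κ^2 = nc * (1 + t^2) := by rw [hk2, habs_cc, hnx]; ring
  have hcc2 : cc^2 = γ^2 * d^2 := by rw [hccd]; ring
  have hxsq : x^2 = -((t:ℂ)^2 * cc^2) := by
    rw [hx, mul_pow, mul_pow, Complex.I_sq]; ring
  have hbc : bc = d^2 * (1 + (t:ℂ)^2 * γ^2) := by
    linear_combination hxbc - hxsq + ((t:ℂ)^2) * hcc2
  have hnormγ2 : u^2 + v^2 = g^2 := by
    have h' : Complex.normSq (γ^2) = g^2 := by rw [hgdef, map_pow]
    rw [← h', Complex.normSq_apply, hudef, hvdef]; ring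
  have hrebc : (1 + (t:ℂ)^2 * γ^2).re = 1 + t^2 * u := by
    rw [hudef]
    simp [Complex.add_re, Complex.mul_re, ← Complex.ofReal_pow]
  have himbc : (1 + (t:ℂ)^2 * γ^2).im = t^2 * v := by
    rw [hvdef]
    simp [Complex.add_im, Complex.mul_im, ← Complex.ofReal_pow]
  have hbig : κ^4 = nd^2 * ((1 + t^2*u)^2 + (t^2*v)^2) := by
    have h2' : Complex.normSq bc = κ^4 := by
      have h3' : ‖bc‖ ^ 2 = (κ^2)^2 := by rw [habc]
      rw [Complex.sq_norm] at h3'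
      rw [h3']; ring
    rw [← h2', hbc, map_mul]
    have hnd2 : Complex.normSq (d^2) = nd^2 := by rw [hnddef, map_pow]
    have hrest : Complex.normSq (1 + (t:ℂ)^2*γ^2) = (1 + t^2*u)^2 + (t^2*v)^2 := by
      rw [Complex.normSq_apply, hrebc, himbc]; ring
    rw [hnd2, hrest]
  have hncg : nc = g * nd := by
    rw [hncdef, hccd, Complex.normSq_neg, Complex.normSq_mul, hgdef, hnddef]
  have hk2'' : κ^2 = g * nd * (1 + t^2) := by rw [hk2', hncg]
  have hcanc : g^2 * (1+t^2)^2 = (1 + t^2*u)^2 + (t^2*v)^2 := by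
    apply mul_left_cancel₀ (pow_ne_zero 2 hnd0)
    linear_combination hbig - (κ^2 + g*nd*(1+t^2)) * hk2''
  have hlin : 2*(g^2 - u)*t^2 = 1 - g^2 := by
    linear_combination hcanc + t^4 * hnormγ2
  have hne : g^2 - u ≠ 0 := by
    intro h
    have hg1 : g^2 = 1 := by linear_combination hlin - (2*t^2) * h
    have hu1 : u = 1 := by linear_combination hg1 - h
    have hv2 : v^2 = 0 := by linear_combination hnormγ2 - (u+1)*hu1 + hg1
    have hv0 : v = 0 := by
      have := sq_eq_zero_iff.mp hv2
      exact this
    have hγsq : γ^2 = 1 := Complex.ext_iff.mpr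
      ⟨by rw [Complex.one_re]; exact hudef.symm.trans hu1,
       by rw [Complex.one_im]; exact hvdef.symm.trans hv0⟩
    have hfac : (γ - 1) * (γ + 1) = 0 := by linear_combination hγsq
    rcases mul_eq_zero.mp hfac with h' | h'
    · exact hγ1 (by linear_combination h')
    · exact hγm1 (by linear_combination h')
  have ht2 : t^2 = (1 - g^2)/(2*(g^2 - u)) := by
    rw [eq_div_iff (mul_ne_zero two_ne_zero hne)]
    linear_combination hlin
  rw [habs_cc, habs_γ4, hk2', ht2]

open Matrix in
theorem aux_sim (l1 : ℂ) (hl1 : l1 ≠ 0) (B : Matrix (Fin 2) (Fin 2) ℂ)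
    (htr : B 1 1 = -(B 0 0)) (hdet : B 0 0 ^ 2 + B 0 1 * B 1 0 = l1 ^ 2)
    (hc : B 1 0 ≠ 0) :
    ∃ Q : Matrix (Fin 2) (Fin 2) ℂ, IsUnit Q ∧ Q⁻¹ * B * Q = !![l1, 0; 0, -l1] := by
  have hQ : IsUnit (!![B 0 0 + l1, B 0 0 - l1; B 1 0, B 1 0] : Matrix (Fin 2) (Fin 2) ℂ) := by
    rw [Matrix.isUnit_iff_isUnit_det, Matrix.det_fin_two_of, isUnit_iff_ne_zero]
    intro h
    apply hc
    have h2 : (2 : ℂ) * l1 * B 1 0 = 0 := by linear_combination h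
    rcases mul_eq_zero.mp h2 with h' | h'
    · rcases mul_eq_zero.mp h' with h'' | h''
      · exact absurd h'' two_ne_zero
      · exact absurd h'' hl1
    · exact h'
  refine ⟨!![B 0 0 + l1, B 0 0 - l1; B 1 0, B 1 0], hQ, ?_⟩
  have hBQ : B * !![B 0 0 + l1, B 0 0 - l1; B 1 0, B 1 0] =
      !![B 0 0 + l1, B 0 0 - l1; B 1 0, B 1 0] * !![l1, 0; 0, -l1] := by
    ext i j
    fin_cases i <;> fin_cases j <;>
      simp [Matrix.mul_apply, Fin.sum_univ_two, htr] <;>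
      first | linear_combination hdet | linear_combination -hdet | ring
  rw [Matrix.mul_assoc, hBQ, ← Matrix.mul_assoc,
    Matrix.nonsing_inv_mul _ ((Matrix.isUnit_iff_isUnit_det _).mp hQ), Matrix.one_mul]

open Matrix in
theorem aux_spectrum (A : Matrix (Fin 2) (Fin 2) ℂ) (l1 l2 : ℂ)
    (htr : A.trace = l1 + l2) (hdet : A.det = l1 * l2) :
    spectrum ℂ A = {l1, l2} := by
  ext μ
  rw [spectrum.mem_iff]
  have htr2 : A 0 0 + A 1 1 = l1 + l2 := by rw [← Matrix.trace_fin_two]; exact htr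
  have hdet2 : A 0 0 * A 1 1 - A 0 1 * A 1 0 = l1 * l2 := by
    rw [← Matrix.det_fin_two]; exact hdet
  have hdet' : (algebraMap ℂ (Matrix (Fin 2) (Fin 2) ℂ) μ - A).det = (μ - l1) * (μ - l2) := by
    rw [Matrix.det_fin_two]
    simp [Matrix.algebraMap_matrix_apply]
    linear_combination (-μ) * htr2 + hdet2
  rw [Matrix.isUnit_iff_isUnit_det, hdet', isUnit_iff_ne_zero, not_ne_iff, mul_eq_zero,
    sub_eq_zero, sub_eq_zero]
  rfl

open Matrix in
theorem aux_construct (l1 : ℂ) (hl1 : l1 ≠ 0) (κ : ℝ)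
    (hκ : ‖l1‖ / Real.sqrt 2 ≤ κ) :
    ∃ B : Matrix (Fin 2) (Fin 2) ℂ,
      (∀ i j, ‖B i j‖ = κ) ∧
      B 1 1 = -(B 0 0) ∧ B 0 0 ^ 2 + B 0 1 * B 1 0 = l1 ^ 2 ∧ B 1 0 ≠ 0 := by
  have hab : 0 < ‖l1‖ := norm_pos_iff.mpr hl1
  have hsq2 : (0:ℝ) < Real.sqrt 2 := Real.sqrt_pos.mpr two_pos
  have hsq2' : Real.sqrt 2 ^ 2 = 2 := Real.sq_sqrt (by norm_num)
  have hκpos : 0 < κ := lt_of_lt_of_le (div_pos hab hsq2) hκ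
  set t : ℝ := κ / ‖l1‖ with htdef
  have ht : 0 < t := div_pos hκpos hab
  have hκt : κ = ‖l1‖ * t := by rw [htdef, mul_div_cancel₀ _ hab.ne']
  have hl1κ : ‖l1‖ ≤ κ * Real.sqrt 2 := (div_le_iff₀ hsq2).mp hκ
  have ht2 : 1 ≤ 2 * t^2 := by
    have h1 : ‖l1‖ ≤ ‖l1‖ * t * Real.sqrt 2 := by rw [← hκt]; exact hl1κ
    have h2 : 1 ≤ t * Real.sqrt 2 := by
      rw [mul_assoc] at h1
      have := (mul_le_mul_iff_right₀ hab).mp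
        (by linarith [h1] : ‖l1‖ * 1 ≤ ‖l1‖ * (t * Real.sqrt 2))
      linarith
    nlinarith [h2, hsq2', ht]
  have hnn : (0:ℝ) ≤ 1/(2*t^2) := by positivity
  have hcos : Real.cos (Real.arccos (1/(2*t^2))) = 1/(2*t^2) :=
    Real.cos_arccos (by linarith) (by rw [div_le_one (by positivity)]; linarith)
  set φ : ℝ := Real.arccos (1/(2*t^2)) with hφdef
  have key : 2 * t^2 * Real.cos φ = 1 := by
    rw [hcos]; field_simp
  set x : ℂ := (t:ℂ) * Complex.exp ((φ/2 : ℝ) * Complex.I) with hxdef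
  have hx2 : x^2 = ((t^2 : ℝ) : ℂ) * Complex.exp ((φ:ℝ) * Complex.I) := by
    rw [hxdef, mul_pow, ← Complex.exp_nat_mul]
    push_cast
    ring_nf
  have habsx : ‖x‖ = t := by
    rw [hxdef, norm_mul, Complex.norm_real, Real.norm_eq_abs, abs_of_pos ht,
      Complex.norm_exp_ofReal_mul_I, mul_one]
  have habsw : ‖1 - x^2‖ = t^2 := by
    rw [hx2, Complex.norm_def, Complex.normSq_apply]
    have h1 : ((1:ℂ) - ((t^2:ℝ):ℂ) * Complex.exp ((φ:ℝ)*Complex.I)).re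
        = 1 - t^2 * Real.cos φ := by
      simp [Complex.sub_re, Complex.mul_re, Complex.exp_ofReal_mul_I_re,
        Complex.exp_ofReal_mul_I_im, ← Complex.ofReal_pow]
    have h2 : ((1:ℂ) - ((t^2:ℝ):ℂ) * Complex.exp ((φ:ℝ)*Complex.I)).im
        = -(t^2 * Real.sin φ) := by
      simp [Complex.sub_im, Complex.mul_im, Complex.exp_ofReal_mul_I_re,
        Complex.exp_ofReal_mul_I_im, ← Complex.ofReal_pow]
    rw [h1, h2]
    have h3 : (1 - t^2*Real.cos φ) * (1 - t^2*Real.cos φ)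
        + -(t^2*Real.sin φ) * -(t^2*Real.sin φ) = (t^2)^2 := by
      nlinarith [key, Real.sin_sq_add_cos_sq φ]
    rw [h3, Real.sqrt_sq (by positivity)]
  set z : ℂ := (1 - x^2) / (t:ℂ) with hzdef
  have ht0' : (t:ℂ) ≠ 0 := Complex.ofReal_ne_zero.mpr ht.ne'
  have habsz : ‖z‖ = t := by
    rw [hzdef, norm_div, habsw, Complex.norm_real, Real.norm_eq_abs, abs_of_pos ht, sq]
    field_simp
  have hz0 : z ≠ 0 := by
    intro h
    rw [h] at habsz
    simp at habsz
    linarith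
  have htz : (t:ℂ) * z = 1 - x^2 := by rw [hzdef]; field_simp
  refine ⟨!![l1*x, l1*(t:ℂ); l1*z, -(l1*x)], ?_, by simp, ?_, ?_⟩
  · have e00 : ‖l1*x‖ = κ := by rw [norm_mul, habsx]; exact hκt.symm
    have e01 : ‖l1*(t:ℂ)‖ = κ := by
      rw [norm_mul, Complex.norm_real, Real.norm_eq_abs, abs_of_pos ht]; exact hκt.symm
    have e10 : ‖l1*z‖ = κ := by rw [norm_mul, habsz]; exact hκt.symm
    have e11 : ‖-(l1*x)‖ = κ := by rw [norm_neg]; exact e00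
    intro i j
    fin_cases i <;> fin_cases j <;>
      simp only [Matrix.cons_val', Matrix.cons_val_zero, Matrix.cons_val_one,
        Matrix.head_cons, Matrix.empty_val', Matrix.cons_val_fin_one, Matrix.head_fin_const] <;>
      first | exact e00 | exact e01 | exact e10 | exact e11
  · simp
    linear_combination l1^2 * htz
  · simp
    exact ⟨hl1, hz0⟩

/-- For an apportionable `2 × 2` complex matrix with distinct nonzero
eigenvalues `λ₁, λ₂` and `γ = (λ₂ + λ₁)/(λ₂ - λ₁)`: the set of apportionment
constants is `[ρ(A)/√2, ∞)` when `γ = 0`, and otherwise it is the singleton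
`{ |(λ₁ + λ₂)/2| * √(1 + (1 - |γ|⁴)/(2(|γ|⁴ - Re γ²))) }`. -/
theorem two_by_two_apportionmentConstants (A : Matrix (Fin 2) (Fin 2) ℂ) (l1 l2 : ℂ)
    (h1 : l1 ≠ 0) (h2 : l2 ≠ 0) (h12 : l1 ≠ l2)
    (hchar : A.charpoly =
      (Polynomial.X - Polynomial.C l1) * (Polynomial.X - Polynomial.C l2))
    (hA : IsApportionable A) :
    ((l2 + l1) / (l2 - l1) = 0 →
      apportionmentConstants A = Set.Ici (specRad A / Real.sqrt 2)) ∧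
    ((l2 + l1) / (l2 - l1) ≠ 0 →
      apportionmentConstants A =
        {‖(l1 + l2) / 2‖ *
          Real.sqrt (1 +
            (1 - ‖(l2 + l1) / (l2 - l1)‖ ^ 4) /
              (2 * (‖(l2 + l1) / (l2 - l1)‖ ^ 4 -
                ((((l2 + l1) / (l2 - l1)) ^ 2).re))))}) := by
  have hsub : l2 - l1 ≠ 0 := sub_ne_zero.mpr (Ne.symm h12)
  obtain ⟨htrA, hdetA⟩ := aux_trace_det A l1 l2 hchar
  have hsq2 : (0:ℝ) < Real.sqrt 2 := Real.sqrt_pos.mpr two_pos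
  have hsq2' : Real.sqrt 2 ^ 2 = 2 := Real.sq_sqrt (by norm_num)
  constructor
  · -- γ = 0 case
    intro hγ
    have hsum : l2 + l1 = 0 := by
      rcases div_eq_zero_iff.mp hγ with h | h
      · exact h
      · exact absurd h hsub
    have hl2 : l2 = -l1 := by linear_combination hsum
    have hrad : specRad A = ‖l1‖ := by
      rw [specRad, aux_spectrum A l1 l2 htrA hdetA]
      have himg : (fun z : ℂ => ‖z‖) '' {l1, l2} = {‖l1‖} := by
        rw [Set.image_pair, hl2, norm_neg, Set.pair_eq_singleton]
      rw [himg, csSup_singleton]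
    rw [hrad]
    ext κ
    simp only [Set.mem_Ici, apportionmentConstants, Set.mem_setOf_eq]
    constructor
    · intro hκmem
      obtain ⟨hκ0, x, bc, hk2, horth, hxbc, habc⟩ := aux_member_facts A l1 l2 hchar κ hκmem
      have hcc : (l1+l2)/2 = 0 := by rw [div_eq_zero_iff]; left; linear_combination hsum
      rw [hcc] at hk2
      simp only [norm_zero, ne_eq, OfNat.ofNat_ne_zero, not_false_eq_true, zero_pow,
        zero_add] at hk2
      have hd : (l1-l2)/2 = l1 := by rw [hl2]; ring
      rw [hd] at hxbc
      have htri : ‖l1^2‖ ≤ ‖x^2‖ + ‖bc‖ := by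
        rw [← hxbc]
        exact norm_add_le (x^2) bc
      rw [norm_pow, norm_pow] at htri
      rw [← hk2] at htri
      rw [habc] at htri
      rw [div_le_iff₀ hsq2]
      have habs2 : ‖l1‖ ^ 2 ≤ (κ * Real.sqrt 2)^2 := by
        rw [mul_pow, hsq2']; linarith [htri]
      calc ‖l1‖ = Real.sqrt (‖l1‖ ^ 2) :=
            (Real.sqrt_sq (norm_nonneg l1)).symm
        _ ≤ Real.sqrt ((κ * Real.sqrt 2)^2) := Real.sqrt_le_sqrt habs2
        _ = κ * Real.sqrt 2 := Real.sqrt_sq (mul_nonneg hκ0 hsq2.le)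
    · intro hbound
      obtain ⟨B, hBu, hBtr, hBdet, hBc⟩ := aux_construct l1 h1 κ hbound
      obtain ⟨Q2, hQ2, hQ2eq⟩ := aux_sim l1 h1 B hBtr hBdet hBc
      obtain ⟨M0, hM0, κ', hκ'0, hunif⟩ := hA
      obtain ⟨htrB0, hdetB0⟩ := aux_conj_trace_det M0 A hM0
      rw [htrA] at htrB0
      rw [hdetA] at hdetB0
      set B0 := M0 * A * M0⁻¹ with hB0def
      have htr0 : B0 0 0 + B0 1 1 = l1 + l2 := by rw [← Matrix.trace_fin_two]; exact htrB0
      have hdet0 : B0 0 0 * B0 1 1 - B0 0 1 * B0 1 0 = l1 * l2 := by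
        rw [← Matrix.det_fin_two]; exact hdetB0
      have hB0tr : B0 1 1 = -(B0 0 0) := by linear_combination htr0 + hsum
      have hB0det : B0 0 0 ^ 2 + B0 0 1 * B0 1 0 = l1^2 := by
        linear_combination -hdet0 - l1 * hsum + (B0 0 0) * hB0tr
      have hB0c : B0 1 0 ≠ 0 := by
        intro h
        have hκ'' : κ' = 0 := by
          have h' := hunif 1 0
          rw [h, norm_zero] at h'
          exact h'.symm
        have ha : B0 0 0 = 0 := by
          have := hunif 0 0
          rw [hκ''] at this
          exact norm_eq_zero.mp this
        have hb : B0 0 1 = 0 := by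
          have := hunif 0 1
          rw [hκ''] at this
          exact norm_eq_zero.mp this
        have hc' : B0 1 1 = 0 := by
          have := hunif 1 1
          rw [hκ''] at this
          exact norm_eq_zero.mp this
        rw [ha, hb, hc'] at hdet0
        simp at hdet0
        rcases hdet0 with h' | h'
        · exact h1 h'
        · exact h2 h'
      obtain ⟨Q1, hQ1, hQ1eq⟩ := aux_sim l1 h1 B0 hB0tr hB0det hB0c
      have hdQ1 : IsUnit Q1.det := (Matrix.isUnit_iff_isUnit_det Q1).mp hQ1
      have hdQ2 : IsUnit Q2.det := (Matrix.isUnit_iff_isUnit_det Q2).mp hQ2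
      have hdM0 : IsUnit M0.det := (Matrix.isUnit_iff_isUnit_det M0).mp hM0
      refine ⟨le_trans (by positivity) hbound, Q2 * Q1⁻¹ * M0, ?_, ?_⟩
      · exact (hQ2.mul ((Matrix.isUnit_iff_isUnit_det _).mpr
          (by rw [Matrix.det_nonsing_inv]; exact isUnit_ringInverse.mpr hdQ1))).mul hM0
      · have hMinv : (Q2 * Q1⁻¹ * M0)⁻¹ = M0⁻¹ * Q1 * Q2⁻¹ := by
          apply Matrix.inv_eq_right_inv
          calc Q2 * Q1⁻¹ * M0 * (M0⁻¹ * Q1 * Q2⁻¹)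
              = Q2 * Q1⁻¹ * (M0 * M0⁻¹) * Q1 * Q2⁻¹ := by
                simp only [Matrix.mul_assoc]
            _ = Q2 * Q1⁻¹ * Q1 * Q2⁻¹ := by
                rw [Matrix.mul_nonsing_inv M0 hdM0, Matrix.mul_one]
            _ = Q2 * Q2⁻¹ := by
                rw [Matrix.mul_assoc Q2 Q1⁻¹ Q1, Matrix.nonsing_inv_mul Q1 hdQ1, Matrix.mul_one]
            _ = 1 := Matrix.mul_nonsing_inv Q2 hdQ2
        have hfinal : Q2 * Q1⁻¹ * M0 * A * (Q2 * Q1⁻¹ * M0)⁻¹ = B := by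
          rw [hMinv]
          have hstep : Q2 * Q1⁻¹ * M0 * A * (M0⁻¹ * Q1 * Q2⁻¹)
              = Q2 * (Q1⁻¹ * B0 * Q1) * Q2⁻¹ := by
            rw [hB0def]
            simp only [Matrix.mul_assoc]
          rw [hstep, hQ1eq, ← hQ2eq]
          calc Q2 * (Q2⁻¹ * B * Q2) * Q2⁻¹
              = (Q2 * Q2⁻¹) * B * (Q2 * Q2⁻¹) := by simp only [Matrix.mul_assoc]
            _ = B := by rw [Matrix.mul_nonsing_inv Q2 hdQ2, Matrix.one_mul, Matrix.mul_one]
        intro i j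
        rw [hfinal]
        exact hBu i j
  · -- γ ≠ 0 case
    intro hγ
    have hsum : l2 + l1 ≠ 0 := by
      intro h
      exact hγ (by rw [div_eq_zero_iff]; left; exact h)
    have hγ1 : (l2 + l1) / (l2 - l1) ≠ 1 := by
      intro h
      rw [div_eq_one_iff_eq hsub] at h
      exact h1 (by linear_combination h/2)
    have hγm1 : (l2 + l1) / (l2 - l1) ≠ -1 := by
      intro h
      rw [div_eq_iff hsub] at h
      exact h2 (by linear_combination h/2)
    have hcc0 : (l1 + l2)/2 ≠ 0 := by
      intro h
      exact hsum (by linear_combination 2 * h)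
    have hd0 : (l1 - l2)/2 ≠ 0 := div_ne_zero (sub_ne_zero.mpr h12) two_ne_zero
    have hccd : (l1 + l2)/2 = -(((l2 + l1) / (l2 - l1)) * ((l1 - l2)/2)) := by
      field_simp
      ring
    have hkey : ∀ κ : ℝ, IsApportionmentConstant A κ →
        κ^2 = ‖(l1+l2)/2‖ ^ 2 * (1 +
          (1 - ‖(l2+l1)/(l2-l1)‖ ^ 4) /
            (2 * (‖(l2+l1)/(l2-l1)‖ ^ 4 - ((((l2+l1)/(l2-l1))^2).re)))) := by
      intro κ hκm
      obtain ⟨hκ0, x, bc, hk2, horth, hxbc, habc⟩ := aux_member_facts A l1 l2 hchar κ hκm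
      exact aux_kappa_sq ((l2+l1)/(l2-l1)) ((l1+l2)/2) ((l1-l2)/2) hγ1 hγm1 hcc0 hd0 hccd
        κ x bc hk2 horth hxbc habc
    obtain ⟨M0, hM0, κ', hκ'0, hunif⟩ := hA
    have hmem' : IsApportionmentConstant A κ' := ⟨hκ'0, M0, hM0, hunif⟩
    have h'sq := hkey κ' hmem'
    have habscc : 0 < ‖(l1+l2)/2‖ := norm_pos_iff.mpr hcc0
    set S : ℝ := 1 + (1 - ‖(l2+l1)/(l2-l1)‖ ^ 4) /
        (2 * (‖(l2+l1)/(l2-l1)‖ ^ 4 - ((((l2+l1)/(l2-l1))^2).re))) with hSdef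
    have hS : S = (κ' / ‖(l1+l2)/2‖)^2 := by
      rw [div_pow, eq_div_iff (pow_ne_zero 2 habscc.ne')]
      linarith [h'sq]
    have hsqrtS : Real.sqrt S = κ' / ‖(l1+l2)/2‖ := by
      rw [hS, Real.sqrt_sq (div_nonneg hκ'0 habscc.le)]
    have hval : ‖(l1+l2)/2‖ * Real.sqrt S = κ' := by
      rw [hsqrtS, mul_div_cancel₀ _ habscc.ne']
    ext κ
    simp only [apportionmentConstants, Set.mem_setOf_eq, Set.mem_singleton_iff]
    constructor
    · intro hκm
      have hκsq := hkey κ hκm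
      have hκ0 := hκm.1
      have heq : κ = κ' := by
        have : κ^2 = κ'^2 := by rw [hκsq, h'sq]
        calc κ = Real.sqrt (κ^2) := (Real.sqrt_sq hκ0).symm
          _ = Real.sqrt (κ'^2) := by rw [this]
          _ = κ' := Real.sqrt_sq hκ'0
      rw [heq, ← hval]
    · intro h
      rw [h, hval]
      exact hmem'
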